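/- arXiv:2304.12545 — 8 statements merged into one kernel-verified Lean document; each statement's English description precedes it below -/
import Mathlib

section
/- Let z : ℤ → ℂ be a sequence of nonzero complex numbers satisfying 1 - z_i = z_{i-1} · z_{i+1} for all i ∈ ℤ. Then the sequence has period 5, i.e. z_{i+5} = z_i for all i ∈ ℤ. -/
/-- A sequence of nonzero complex numbers satisfying the cyclic five-term
recurrence `1 - z_i = z_{i-1} * z_{i+1}` has period 5. -/
theorem five_term_recurrence_period_five (z : ℤ → ℂ) (hz : ∀ i, z i ≠ 0)
    (hrec : ∀ i : ℤ, 1 - z i = z (i - 1) * z (i + 1)) :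
    ∀ i : ℤ, z (i + 5) = z i := by
  intro i
  have h1 := hrec (i + 1)
  have h2 := hrec (i + 2)
  have h3 := hrec (i + 3)
  have h4 := hrec (i + 4)
  simp only [show i+1-1 = i from by ring, show i+1+1 = i+2 from by ring,
    show i+2-1 = i+1 from by ring, show i+2+1 = i+3 from by ring,
    show i+3-1 = i+2 from by ring, show i+3+1 = i+4 from by ring,
    show i+4-1 = i+3 from by ring, show i+4+1 = i+5 from by ring] at h1 h2 h3 h4
  have hc := hz (i + 2)
  have hd := hz (i + 3)
  have key : z (i + 2) * (z (i + 3) * z (i + 5)) =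
      z (i + 2) * (z (i + 3) * z i) := by
    linear_combination (z (i + 3)) * h1 - h2 + h3 - (z (i + 2)) * h4
  exact mul_left_cancel₀ hd (mul_left_cancel₀ hc key)
end

section
/- Let z_0, z_1, z_2, z_3, z_4 be complex numbers, each different from 0 and 1, satisfying 1 - z_i = z_{i-1} · z_{i+1} for all i ∈ ℤ/5 (indices mod 5). Then Σ_{i∈ℤ/5} (z_i) ∧ (1 - z_i) = 0 in the second exterior power Λ²(ℂ×) of the multiplicative group of ℂ, taken as a ℤ-module (writing the group ℂ× additively). -/
/-! Since `1 - z i = z (i - 1) * z (i + 1)`, bilinearity turns the sum into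
`∑ i, (z i) ∧ (z (i - 1)) + (z i) ∧ (z (i + 1))`; reindexing the first half by `i ↦ i + 1`
pairs each `(z (i + 1)) ∧ (z i)` with `(z i) ∧ (z (i + 1))`, and these cancel by antisymmetry. -/

open ExteriorAlgebra

/-- The wedge `(x) ∧ (y)` of two units of `ℂ`, viewed as an element (of degree 2)
of the exterior algebra over `ℤ` of the multiplicative group `ℂˣ` written additively. -/
noncomputable def wedge (x y : ℂˣ) : ExteriorAlgebra ℤ (Additive ℂˣ) :=
  ι ℤ (Additive.ofMul x) * ι ℤ (Additive.ofMul y)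

lemma wedge_mul_right (x y y' : ℂˣ) : wedge x (y * y') = wedge x y + wedge x y' := by
  simp only [wedge, ofMul_mul, map_add, mul_add]

lemma wedge_swap (x y : ℂˣ) : wedge y x = -wedge x y :=
  eq_neg_of_add_eq_zero_left (ι_add_mul_swap (R := ℤ) (Additive.ofMul y) (Additive.ofMul x))

lemma sum_wedge_sub_add_wedge_add_eq_zero {G : Type*} [AddGroup G] [Fintype G]
    (u : G → ℂˣ) (g : G) :
    ∑ i, (wedge (u i) (u (i - g)) + wedge (u i) (u (i + g))) = 0 := by
  have reindex : ∑ i, wedge (u i) (u (i - g)) = ∑ i, wedge (u (i + g)) (u i) :=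
    Fintype.sum_equiv (Equiv.subRight g) _ _ fun i => by simp
  rw [Finset.sum_add_distrib, reindex, ← Finset.sum_add_distrib]
  exact Finset.sum_eq_zero fun i _ => by rw [wedge_swap, neg_add_cancel]

/-- The five arguments of the cyclic form of the five-term relation satisfy
`∑ (z_i) ∧ (1 - z_i) = 0` in `Λ²(ℂˣ)`. -/
theorem five_term_arguments_wedge_sum_eq_zero (z : ZMod 5 → ℂ)
    (h0 : ∀ i, z i ≠ 0) (h1 : ∀ i, z i ≠ 1)
    (hrec : ∀ i : ZMod 5, 1 - z i = z (i - 1) * z (i + 1)) :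
    ∑ i : ZMod 5, wedge (Units.mk0 (z i) (h0 i))
      (Units.mk0 (1 - z i) (sub_ne_zero_of_ne (Ne.symm (h1 i)))) = 0 := by
  set u : ZMod 5 → ℂˣ := fun i => Units.mk0 (z i) (h0 i)
  have one_sub_eq : ∀ i, Units.mk0 (1 - z i) (sub_ne_zero_of_ne (Ne.symm (h1 i)))
      = u (i - 1) * u (i + 1) := fun i => Units.ext (hrec i)
  simp only [one_sub_eq, wedge_mul_right]
  exact sum_wedge_sub_add_wedge_add_eq_zero u 1
end

section
/- Let N ≥ 1, let a be a symmetric N × N matrix with integer entries, and let z_1, …, z_N be complex numbers, each different from 0 and 1, satisfying the Nahm equations 1 - z_i = Π_{j=1}^N z_j^{a_{ij}} for i = 1, …, N (integer powers). Then Σ_{i=1}^N (z_i) ∧ (1 - z_i) = 0 in Λ²(ℂ×), the second exterior power over ℤ of the multiplicative group ℂ× written additively. -/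
open ExteriorAlgebra

/-- For any solution of the Nahm equations associated to a symmetric integer matrix `a`,
the element `∑ (z_i) ∧ (1 - z_i)` vanishes in `Λ²(ℂˣ)`. -/
theorem nahm_solution_wedge_sum_eq_zero (N : ℕ) (hN : 1 ≤ N)
    (a : Matrix (Fin N) (Fin N) ℤ) (ha : a.IsSymm)
    (z : Fin N → ℂ) (h0 : ∀ i, z i ≠ 0) (h1 : ∀ i, z i ≠ 1)
    (hnahm : ∀ i, 1 - z i = ∏ j, z j ^ (a i j)) :
    ∑ i, wedge (Units.mk0 (z i) (h0 i))
      (Units.mk0 (1 - z i) (sub_ne_zero_of_ne (Ne.symm (h1 i)))) = 0 := by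
  set u : Fin N → Additive ℂˣ := fun i => Additive.ofMul (Units.mk0 (z i) (h0 i)) with hu
  have hv : ∀ i, Additive.ofMul (Units.mk0 (1 - z i)
      (sub_ne_zero_of_ne (Ne.symm (h1 i)))) = ∑ j, a i j • u j := by
    intro i
    have hunits : (Units.mk0 (1 - z i) (sub_ne_zero_of_ne (Ne.symm (h1 i))))
        = ∏ j, (Units.mk0 (z j) (h0 j)) ^ (a i j) := by
      ext
      simp [hnahm i]
    rw [hunits, ofMul_prod]
    simp [ofMul_zpow, hu]
  have step : ∀ i, wedge (Units.mk0 (z i) (h0 i))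
      (Units.mk0 (1 - z i) (sub_ne_zero_of_ne (Ne.symm (h1 i))))
      = ∑ j, a i j • (ι ℤ (u i) * ι ℤ (u j)) := by
    intro i
    rw [wedge, hv i, map_sum, Finset.mul_sum]
    congr 1; funext j
    rw [map_zsmul, mul_smul_comm]
  simp_rw [step]
  rw [← Finset.sum_product']
  refine Finset.sum_ninvolution Prod.swap (fun p => ?_) (fun p hp => ?_)
    (fun p => Finset.mem_univ _) (fun p => Prod.swap_swap p)
  · show a p.1 p.2 • (ι ℤ (u p.1) * ι ℤ (u p.2))
        + a p.2 p.1 • (ι ℤ (u p.2) * ι ℤ (u p.1)) = 0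
    rw [ha.apply p.1 p.2, ← smul_add, ι_add_mul_swap, smul_zero]
  · intro heq
    have h12 : p.2 = p.1 := congrArg Prod.fst heq
    apply hp
    show a p.1 p.2 • (ι ℤ (u p.1) * ι ℤ (u p.2)) = 0
    rw [h12, ι_sq_zero, smul_zero]
end

section
/- Let N ≥ 1 and let A and B be N × N matrices with rational entries, and let H = (A B) be the N × 2N matrix obtained by juxtaposing them. Then the following are equivalent: (i) A·Bᵗ is symmetric and H has rank N; (ii) there exist N × N rational matrices C and D such that the 2N × 2N block matrix with rows (A B) and (C D) belongs to the symplectic group Sp_{2N}(ℚ). -/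
/-!
If `A * Bᵀ` is symmetric and `H = (A B)` has full row rank, then over an ordered field the
Gram matrix `E = H * Hᵀ = A * Aᵀ + B * Bᵀ` is invertible, and `C = -E⁻¹ * B`, `D = E⁻¹ * A`
complete `H` to a symplectic matrix. Conversely, the symplectic relations for the rows of
`fromBlocks A B C D` say that `A * Bᵀ` is symmetric and that `(Dᵀ; -Cᵀ)` is a right inverse
of `H`, which forces full rank.
-/

open Matrix

namespace Matrix

variable {m n R : Type*} [Fintype m]

theorem rank_eq_card_of_mul_eq_one [Fintype n] [DecidableEq m] [CommSemiring R]
    [StrongRankCondition R] {M : Matrix m n R} {M' : Matrix n m R} (h : M * M' = 1) :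
    M.rank = Fintype.card m :=
  le_antisymm M.rank_le_card_height <| by simpa [h, rank_one] using M.rank_mul_le_left M'

theorem isUnit_of_rank_eq_card [Fintype n] [DecidableEq n] [Field R] {M : Matrix n n R}
    (h : M.rank = Fintype.card n) : IsUnit M := by
  have hrange : LinearMap.range M.mulVecLin = ⊤ :=
    Submodule.eq_top_of_finrank_eq <| by rwa [← rank, Module.finrank_fintype_fun_eq_card]
  exact mulVec_surjective_iff_isUnit.1 <| LinearMap.range_eq_top.1 hrange

theorem isUnit_mul_transpose_of_rank_eq_card [Fintype n] [DecidableEq m] [Field R]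
    [LinearOrder R] [IsStrictOrderedRing R] {M : Matrix m n R} (h : M.rank = Fintype.card m) :
    IsUnit (M * Mᵀ) :=
  isUnit_of_rank_eq_card <| by rw [rank_self_mul_transpose, h]

theorem IsSymm.mul_mul_transpose [CommSemiring R] {S : Matrix m m R} (hS : S.IsSymm)
    (P : Matrix n m R) : (P * S * Pᵀ).IsSymm := by
  rw [IsSymm, transpose_mul, transpose_mul, transpose_transpose, hS.eq, Matrix.mul_assoc]

end Matrix

namespace SymplecticGroup

variable {l R : Type*} [Fintype l] [DecidableEq l] [CommRing R]

theorem fromBlocks_mem_iff_rows {A B C D : Matrix l l R} :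
    fromBlocks A B C D ∈ symplecticGroup l R ↔
      (A * Bᵀ).IsSymm ∧ (C * Dᵀ).IsSymm ∧ A * Dᵀ - B * Cᵀ = 1 := by
  rw [← transpose_mem_iff, fromBlocks_transpose, fromBlocks_mem_iff]
  simp only [transpose_transpose, IsSymm, transpose_mul, eq_comm]

theorem exists_fromBlocks_mem_of_isUnit_mul_transpose_add {A B : Matrix l l R}
    (hAB : (A * Bᵀ).IsSymm) (hE : IsUnit (A * Aᵀ + B * Bᵀ)) :
    ∃ C D, fromBlocks A B C D ∈ symplecticGroup l R := by
  set E := A * Aᵀ + B * Bᵀ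
  have hEsymm : E⁻¹ᵀ = E⁻¹ := by
    rw [transpose_nonsing_inv, (isSymm_mul_transpose_self A).add (isSymm_mul_transpose_self B)]
  refine ⟨-(E⁻¹ * B), E⁻¹ * A, fromBlocks_mem_iff_rows.2 ⟨hAB, ?_, ?_⟩⟩
  · have hBA : (B * Aᵀ).IsSymm := by simpa [transpose_mul] using hAB.transpose
    have hCD : -(E⁻¹ * B) * (E⁻¹ * A)ᵀ = -(E⁻¹ * (B * Aᵀ) * E⁻¹ᵀ) := by
      simp only [transpose_mul, Matrix.neg_mul, Matrix.mul_assoc]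
    rw [hCD]
    exact (hBA.mul_mul_transpose E⁻¹).neg
  · calc A * (E⁻¹ * A)ᵀ - B * (-(E⁻¹ * B))ᵀ = E * E⁻¹ := by
          simp only [transpose_neg, transpose_mul, hEsymm, E, Matrix.add_mul, Matrix.mul_assoc,
            Matrix.mul_neg, sub_neg_eq_add]
      _ = 1 := mul_nonsing_inv E ((isUnit_iff_isUnit_det E).1 hE)

end SymplecticGroup

theorem half_symplectic_iff_symm_and_rank_general (N : ℕ)
    (A B : Matrix (Fin N) (Fin N) ℚ) :
    ((A * Bᵀ).IsSymm ∧ (Matrix.fromCols A B).rank = N) ↔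
      ∃ C D : Matrix (Fin N) (Fin N) ℚ,
        Matrix.fromBlocks A B C D ∈ Matrix.symplecticGroup (Fin N) ℚ := by
  constructor
  · rintro ⟨hAB, hrank⟩
    have hE : IsUnit (A * Aᵀ + B * Bᵀ) := by
      simpa [transpose_fromCols, fromCols_mul_fromRows] using
        isUnit_mul_transpose_of_rank_eq_card (M := fromCols A B) (by simpa using hrank)
    exact SymplecticGroup.exists_fromBlocks_mem_of_isUnit_mul_transpose_add hAB hE
  · rintro ⟨C, D, hmem⟩
    obtain ⟨hAB, -, hinv⟩ := SymplecticGroup.fromBlocks_mem_iff_rows.1 hmem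
    have hright : fromCols A B * fromRows Dᵀ (-Cᵀ) = 1 := by
      rw [fromCols_mul_fromRows, Matrix.mul_neg, ← sub_eq_add_neg, hinv]
    exact ⟨hAB, by simpa using rank_eq_card_of_mul_eq_one hright⟩

/-- An `N × 2N` rational matrix `H = (A B)` satisfies: `A * Bᵀ` is symmetric and `H` has
rank `N`, if and only if `H` can be completed to a `2N × 2N` rational symplectic matrix. -/
theorem half_symplectic_iff_symm_and_rank (N : ℕ) (hN : 1 ≤ N)
    (A B : Matrix (Fin N) (Fin N) ℚ) :
    ((A * Bᵀ).IsSymm ∧ (Matrix.fromCols A B).rank = N) ↔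
      ∃ C D : Matrix (Fin N) (Fin N) ℚ,
        Matrix.fromBlocks A B C D ∈ Matrix.symplecticGroup (Fin N) ℚ :=
  half_symplectic_iff_symm_and_rank_general N A B
end

section
/- Let N ≥ 1 and let A and B be N × N matrices with integer entries such that A·Bᵗ is symmetric, and let H = (A B) be the N × 2N matrix obtained by juxtaposing them. Then the 2N columns of H span the full lattice ℤ^N (i.e. the ℤ-linear map ℤ^{2N} → ℤ^N given by H is surjective) if and only if there exist N × N integer matrices C and D such that the 2N × 2N block matrix with rows (A B) and (C D) belongs to the symplectic group Sp_{2N}(ℤ). -/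
/-!
A right inverse of `(A B)` is a pair `X, Y` with `A X + B Y = 1`, and blockwise,
`(A B; C D)` is symplectic iff `A Bᵀ` and `C Dᵀ` are symmetric and `A Dᵀ - B Cᵀ = 1`.
So a symplectic completion gives the right inverse `(Dᵀ; -Cᵀ)`. Conversely, the rows
`(-Yᵀ  Xᵀ)` already satisfy `A Dᵀ - B Cᵀ = 1`, and adding `Yᵀ X (A B)` to them, which does
not change `A Dᵀ - B Cᵀ` because `A Bᵀ` is symmetric, makes `C Dᵀ` symmetric.
-/

open Matrix

theorem mulVec_fromCols_surjective_iff {m n R : Type*} [Fintype m] [DecidableEq m] [Fintype n]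
    [Semiring R] {A B : Matrix m n R} :
    Function.Surjective (fromCols A B).mulVec ↔ ∃ X Y : Matrix n m R, A * X + B * Y = 1 := by
  rw [mulVec_surjective_iff_exists_right_inverse]
  constructor
  · rintro ⟨K, hK⟩
    rw [← fromRows_toRows K, fromCols_mul_fromRows] at hK
    exact ⟨_, _, hK⟩
  · rintro ⟨X, Y, h⟩
    exact ⟨fromRows X Y, by rw [fromCols_mul_fromRows, h]⟩

theorem isSymm_mul_transpose_iff {m n R : Type*} [Fintype n] [CommSemiring R]
    {A B : Matrix m n R} : (A * Bᵀ).IsSymm ↔ B * Aᵀ = A * Bᵀ := by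
  rw [IsSymm, transpose_mul, transpose_transpose]

section Symplectic

variable {l R : Type*} [DecidableEq l] [Fintype l] [CommRing R]

theorem fromBlocks_mem_symplecticGroup_iff {A B C D : Matrix l l R} :
    fromBlocks A B C D ∈ symplecticGroup l R ↔
      (A * Bᵀ).IsSymm ∧ (C * Dᵀ).IsSymm ∧ A * Dᵀ - B * Cᵀ = 1 := by
  rw [← SymplecticGroup.transpose_mem_iff, fromBlocks_transpose,
    SymplecticGroup.fromBlocks_mem_iff]
  simp only [transpose_transpose, isSymm_mul_transpose_iff, eq_comm]

theorem fromBlocks_mem_symplecticGroup_of_mul_add_mul_eq_one {A B X Y : Matrix l l R}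
    (hAB : (A * Bᵀ).IsSymm) (hXY : A * X + B * Y = 1) :
    fromBlocks A B (Yᵀ * X * A - Yᵀ) (Yᵀ * X * B + Xᵀ) ∈ symplecticGroup l R := by
  rw [isSymm_mul_transpose_iff] at hAB
  have hXYt : Xᵀ * Aᵀ + Yᵀ * Bᵀ = 1 := by
    simpa only [transpose_add, transpose_mul, transpose_one] using congr_arg transpose hXY
  refine fromBlocks_mem_symplecticGroup_iff.2 ⟨isSymm_mul_transpose_iff.2 hAB, ?_, ?_⟩
  · rw [isSymm_mul_transpose_iff, ← sub_eq_zero]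
    simp only [transpose_sub, transpose_add, transpose_mul, transpose_transpose]
    calc (Yᵀ * X * B + Xᵀ) * (Aᵀ * (Xᵀ * Y) - Y) - (Yᵀ * X * A - Yᵀ) * (Bᵀ * (Xᵀ * Y) + X)
        = Yᵀ * X * (B * Aᵀ - A * Bᵀ) * Xᵀ * Y + (Xᵀ * Aᵀ + Yᵀ * Bᵀ) * Xᵀ * Y - Xᵀ * Y
          - Yᵀ * X * (A * X + B * Y) + Yᵀ * X := by noncomm_ring
      _ = 0 := by rw [hAB, hXY, hXYt]; noncomm_ring
  · simp only [transpose_sub, transpose_add, transpose_mul, transpose_transpose]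
    calc A * (Bᵀ * (Xᵀ * Y) + X) - B * (Aᵀ * (Xᵀ * Y) - Y)
        = (A * Bᵀ - B * Aᵀ) * Xᵀ * Y + (A * X + B * Y) := by noncomm_ring
      _ = 1 := by rw [hAB, hXY]; noncomm_ring

end Symplectic

theorem half_symplectic_int_iff_surjective_general (N : ℕ)
    (A B : Matrix (Fin N) (Fin N) ℤ) (hsym : (A * Bᵀ).IsSymm) :
    Function.Surjective (Matrix.fromCols A B).mulVec ↔
      ∃ C D : Matrix (Fin N) (Fin N) ℤ,
        Matrix.fromBlocks A B C D ∈ Matrix.symplecticGroup (Fin N) ℤ := by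
  rw [mulVec_fromCols_surjective_iff]
  constructor
  · rintro ⟨X, Y, h⟩
    exact ⟨_, _, fromBlocks_mem_symplecticGroup_of_mul_add_mul_eq_one hsym h⟩
  · rintro ⟨C, D, hM⟩
    obtain ⟨-, -, h⟩ := fromBlocks_mem_symplecticGroup_iff.1 hM
    exact ⟨Dᵀ, -Cᵀ, by rw [Matrix.mul_neg, ← sub_eq_add_neg, h]⟩

/-- Let `A`, `B` be `N × N` integer matrices with `A * Bᵀ` symmetric. The columns of the
`N × 2N` matrix `H = (A B)` span the full lattice `ℤ^N` (i.e. the linear map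
`ℤ^{2N} → ℤ^N` given by `H` is surjective) if and only if `H` can be completed to a
`2N × 2N` integer symplectic matrix. -/
theorem half_symplectic_int_iff_surjective (N : ℕ) (hN : 1 ≤ N)
    (A B : Matrix (Fin N) (Fin N) ℤ) (hsym : (A * Bᵀ).IsSymm) :
    Function.Surjective (Matrix.fromCols A B).mulVec ↔
      ∃ C D : Matrix (Fin N) (Fin N) ℤ,
        Matrix.fromBlocks A B C D ∈ Matrix.symplecticGroup (Fin N) ℤ :=
  half_symplectic_int_iff_surjective_general N A B hsym
end

section
/- For every real number θ, the Lobachevsky function satisfies -∫_0^θ log|2 sin t| dt = (1/2) Σ_{n=1}^∞ sin(2nθ)/n², where the series converges absolutely. -/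
/-!
For `|r| < 1` the real part of the logarithm series gives
`-log ‖1 - r e^{ix}‖ = ∑ rⁿ cos (n x) / n`, which integrates termwise over `[0, φ]` to
`∑ rⁿ sin (n φ) / n²`. Letting `r → 1⁻`, the series side converges by Abel's theorem, and the
integral side by dominated convergence: for `r ∈ [1/2, 1]` the modulus `‖1 - r e^{ix}‖` lies between
`‖1 - e^{ix}‖ / 2 = |sin (x / 2)|` and `2`, and `log |sin|` is integrable. This gives
`∑ sin (n φ) / n² = -∫₀^φ log |2 sin (x / 2)| dx`; the substitution `x = 2t` finishes.
-/

open Real Filter Topology MeasureTheory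
open scoped Complex

lemma norm_one_sub_ofReal_mul_sq {w : ℂ} (hw : ‖w‖ = 1) (r : ℝ) :
    ‖1 - r * w‖ ^ 2 = (1 - r) ^ 2 + r * ‖1 - w‖ ^ 2 := by
  rw [Complex.sq_norm, Complex.sq_norm, Complex.normSq_sub, Complex.normSq_sub]
  simp only [map_mul, Complex.conj_ofReal, Complex.re_ofReal_mul, ← Complex.sq_norm, hw, norm_one,
    Complex.norm_real, Real.norm_eq_abs, sq_abs, one_mul]
  ring

lemma abs_log_le_of_mem_Icc {a b y : ℝ} (ha : 0 < a) (hy : y ∈ Set.Icc a b) :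
    |log y| ≤ |log a| + |log b| := by
  have hlo := log_le_log ha hy.1
  have hhi := log_le_log (ha.trans_le hy.1) hy.2
  rw [abs_le]
  constructor <;> linarith [neg_abs_le (log a), le_abs_self (log b), abs_nonneg (log a),
    abs_nonneg (log b)]

lemma abs_log_norm_one_sub_mul_le {w : ℂ} (hw : ‖w‖ = 1) (hw₁ : w ≠ 1) {r : ℝ}
    (hr : r ∈ Set.Icc (1 / 2) 1) :
    |log ‖1 - r * w‖| ≤ |log ‖1 - w‖| + 2 * log 2 := by
  have hd : 0 < ‖1 - w‖ := norm_pos_iff.2 (sub_ne_zero.2 hw₁.symm)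
  have hlo : ‖1 - w‖ / 2 ≤ ‖1 - r * w‖ := by
    refine le_of_sq_le_sq ?_ (norm_nonneg _)
    rw [norm_one_sub_ofReal_mul_sq hw]
    nlinarith [hr.1, sq_nonneg (1 - r), sq_nonneg ‖1 - w‖]
  have hhi : ‖1 - r * w‖ ≤ 2 := by
    calc ‖1 - r * w‖ ≤ ‖(1 : ℂ)‖ + ‖(r : ℂ) * w‖ := norm_sub_le _ _
      _ = 1 + r := by rw [norm_mul, hw, Complex.norm_real, Real.norm_eq_abs,
          abs_of_nonneg (by linarith [hr.1]), norm_one, mul_one]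
      _ ≤ 2 := by linarith [hr.2]
  calc |log ‖1 - r * w‖| ≤ |log (‖1 - w‖ / 2)| + |log 2| :=
        abs_log_le_of_mem_Icc (by positivity) ⟨hlo, hhi⟩
    _ ≤ |log ‖1 - w‖| + 2 * log 2 := by
        have hlog2 : |log 2| = log 2 := abs_of_nonneg (log_nonneg one_le_two)
        rw [log_div hd.ne' two_ne_zero, hlog2]
        linarith [abs_sub (log ‖1 - w‖) (log 2)]

lemma hasSum_pow_mul_cos_div {r : ℝ} (hr : |r| < 1) (x : ℝ) :
    HasSum (fun n : ℕ => r ^ n * cos (n * x) / n) (-log ‖1 - r * cexp (x * Complex.I)‖) := by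
  have hz : ‖(r : ℂ) * cexp (x * Complex.I)‖ < 1 := by
    rwa [norm_mul, Complex.norm_exp_ofReal_mul_I, mul_one, Complex.norm_real, Real.norm_eq_abs]
  convert Complex.hasSum_re (Complex.hasSum_taylorSeries_neg_log hz) using 1
  · funext n
    have harg : (n : ℂ) * (x * Complex.I) = ((n * x : ℝ) : ℂ) * Complex.I := by push_cast; ring
    rw [mul_pow, ← Complex.exp_nat_mul, harg, Complex.div_natCast_re, ← Complex.ofReal_pow,
      Complex.re_ofReal_mul, Complex.exp_ofReal_mul_I_re]
  · rw [Complex.neg_re, Complex.log_re]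

lemma integral_pow_mul_cos_div (r φ : ℝ) (n : ℕ) :
    ∫ x in (0:ℝ)..φ, r ^ n * cos (n * x) / n = sin (n * φ) / n ^ 2 * r ^ n := by
  rcases Nat.eq_zero_or_pos n with rfl | hn
  · simp
  have hn' : (n : ℝ) ≠ 0 := by positivity
  simp only [div_eq_mul_inv, intervalIntegral.integral_mul_const,
    intervalIntegral.integral_const_mul,
    intervalIntegral.integral_comp_mul_left (fun x => cos x) hn', integral_cos, mul_zero, sin_zero, sub_zero, smul_eq_mul]
  field_simp

lemma hasSum_sin_div_sq_mul_pow {r : ℝ} (hr : |r| < 1) (φ : ℝ) :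
    HasSum (fun n : ℕ => sin (n * φ) / n ^ 2 * r ^ n)
      (-∫ x in (0:ℝ)..φ, log ‖1 - r * cexp (x * Complex.I)‖) := by
  have hbound : ∀ (n : ℕ) (x : ℝ), ‖r ^ n * cos (n * x) / n‖ ≤ |r| ^ n := by
    intro n x
    rcases Nat.eq_zero_or_pos n with rfl | hn
    · simp
    rw [norm_div, norm_mul, norm_pow, Real.norm_eq_abs, Real.norm_eq_abs, RCLike.norm_natCast]
    calc |r| ^ n * |cos (n * x)| / n ≤ |r| ^ n * |cos (n * x)| :=
          div_le_self (by positivity) (by exact_mod_cast hn)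
      _ ≤ |r| ^ n := mul_le_of_le_one_right (by positivity) (abs_cos_le_one _)
  have := intervalIntegral.hasSum_integral_of_dominated_convergence (μ := volume) (a := 0) (b := φ)
    (fun n _ => |r| ^ n) (fun n => by fun_prop) (fun n => ae_of_all _ fun x _ => hbound n x)
    (ae_of_all _ fun _ _ => summable_geometric_of_lt_one (abs_nonneg r) hr)
    intervalIntegrable_const (ae_of_all _ fun x _ => hasSum_pow_mul_cos_div hr x)
  rw [← intervalIntegral.integral_neg]
  simpa only [integral_pow_mul_cos_div] using this

lemma ae_exp_ofReal_mul_I_ne_one : ∀ᵐ x : ℝ, cexp (x * Complex.I) ≠ 1 := by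
  refine measure_mono_null (fun x hx => ?_)
    ((Set.countable_range fun k : ℤ => k * π).measure_zero volume)
  have hsin : sin x = 0 := by
    simpa [Complex.exp_ofReal_mul_I_im] using congrArg Complex.im (not_not.1 hx)
  exact sin_eq_zero_iff.1 hsin

lemma norm_one_sub_exp_ofReal_mul_I (x : ℝ) : ‖1 - cexp (x * Complex.I)‖ = |2 * sin (x / 2)| := by
  rw [norm_sub_rev, mul_comm, Complex.norm_exp_I_mul_ofReal_sub_one, Real.norm_eq_abs]

lemma intervalIntegrable_log_abs_two_mul_sin_half (a b : ℝ) :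
    IntervalIntegrable (fun x : ℝ => log |2 * sin (x / 2)|) volume a b := by
  simp only [log_abs]
  refine (AnalyticOnNhd.meromorphicOn fun x _ => ?_).intervalIntegrable_log
  exact analyticAt_const.mul ((analyticOnNhd_sin (s := Set.univ) _ trivial).comp
    (analyticAt_id.div_const))

lemma tendsto_integral_log_norm_one_sub_mul_exp (φ : ℝ) :
    Tendsto (fun r : ℝ => ∫ x in (0:ℝ)..φ, log ‖1 - r * cexp (x * Complex.I)‖) (𝓝[<] 1)
      (𝓝 (∫ x in (0:ℝ)..φ, log |2 * sin (x / 2)|)) := by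
  have hr : ∀ᶠ r in 𝓝[<] (1:ℝ), r ∈ Set.Icc (1 / 2) 1 :=
    mem_of_superset (Ioo_mem_nhdsLT (by norm_num)) Set.Ioo_subset_Icc_self
  refine intervalIntegral.tendsto_integral_filter_of_dominated_convergence
    (fun x => |(log |2 * sin (x / 2)|)| + 2 * log 2)
    (Eventually.of_forall fun r => (by fun_prop : Measurable _).aestronglyMeasurable)
    ?_ ((intervalIntegrable_log_abs_two_mul_sin_half 0 φ).abs.add intervalIntegrable_const) ?_
  · filter_upwards [hr] with r hr
    filter_upwards [ae_exp_ofReal_mul_I_ne_one] with x hx _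
    rw [Real.norm_eq_abs, ← norm_one_sub_exp_ofReal_mul_I]
    exact abs_log_norm_one_sub_mul_le (Complex.norm_exp_ofReal_mul_I x) hx hr
  · filter_upwards [ae_exp_ofReal_mul_I_ne_one] with x hx _
    have hcont : ContinuousAt (fun r : ℝ => log ‖1 - r * cexp (x * Complex.I)‖) 1 :=
      ContinuousAt.log (by fun_prop) (by simpa using sub_ne_zero.2 (Ne.symm hx))
    simpa [norm_one_sub_exp_ofReal_mul_I] using hcont.tendsto.mono_left nhdsWithin_le_nhds

lemma summable_abs_sin_mul_div_sq (φ : ℝ) :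
    Summable fun n : ℕ => |sin (n * φ) / n ^ 2| := by
  refine (Real.summable_one_div_nat_pow.2 one_lt_two).of_nonneg_of_le (fun n => abs_nonneg _)
    fun n => ?_
  rw [abs_div, abs_of_nonneg (by positivity : (0 : ℝ) ≤ (n : ℝ) ^ 2)]
  exact div_le_div_of_nonneg_right (abs_sin_le_one _) (by positivity)

theorem hasSum_sin_mul_div_sq (φ : ℝ) :
    HasSum (fun n : ℕ => sin (n * φ) / n ^ 2) (-∫ x in (0:ℝ)..φ, log |2 * sin (x / 2)|) := by
  have hS : Summable fun n : ℕ => sin (n * φ) / n ^ 2 := (summable_abs_sin_mul_div_sq φ).of_abs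
  have habel := Real.tendsto_tsum_powerSeries_nhdsWithin_lt hS.hasSum.tendsto_sum_nat
  have heq : (fun r : ℝ => ∑' n : ℕ, sin (n * φ) / n ^ 2 * r ^ n) =ᶠ[𝓝[<] 1]
      fun r => -∫ x in (0:ℝ)..φ, log ‖1 - r * cexp (x * Complex.I)‖ := by
    filter_upwards [Ioo_mem_nhdsLT (show (-1 : ℝ) < 1 by norm_num)] with r hr
    exact (hasSum_sin_div_sq_mul_pow (abs_lt.2 hr) φ).tsum_eq
  rw [← tendsto_nhds_unique (habel.congr' heq) (tendsto_integral_log_norm_one_sub_mul_exp φ).neg]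
  exact hS.hasSum

/-- Fourier expansion of the Lobachevsky function:
`𝔏(θ) = -∫_0^θ log|2 sin t| dt = (1/2) ∑_{n≥1} sin(2nθ)/n²`,
the series converging absolutely. -/
theorem lobachevsky_fourier_series (θ : ℝ) :
    (Summable fun n : ℕ+ => |Real.sin (2 * (n : ℝ) * θ) / (n : ℝ) ^ 2|) ∧
    -∫ t in (0 : ℝ)..θ, Real.log |2 * Real.sin t| =
      (1 / 2) * ∑' n : ℕ+, Real.sin (2 * (n : ℝ) * θ) / (n : ℝ) ^ 2 := by
  have hterm (n : ℕ) : sin (n * (2 * θ)) / n ^ 2 = sin (2 * n * θ) / n ^ 2 := by ring_nf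
  have hhalf : ∫ t in (0:ℝ)..θ, log |2 * sin t| =
      (1 / 2) * ∫ x in (0:ℝ)..2 * θ, log |2 * sin (x / 2)| := by
    simpa [mul_div_cancel_left₀] using
      intervalIntegral.integral_comp_mul_left (fun x => log |2 * sin (x / 2)|) (a := 0) (b := θ)
        two_ne_zero
  refine ⟨?_, ?_⟩
  · simpa only [hterm] using
      summable_pnat_iff_summable_nat.2 (summable_abs_sin_mul_div_sq (2 * θ))
  · rw [hhalf, tsum_pnat_eq_tsum_of_eq_zero (f := fun n : ℕ => sin (2 * n * θ) / n ^ 2) (by simp),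
      ← tsum_congr hterm, (hasSum_sin_mul_div_sq (2 * θ)).tsum_eq]
    ring
end

section
/- Let N ≥ 1 and let a be a symmetric positive definite N × N matrix with real entries. Then there exists a unique vector (z_1, …, z_N) with all z_i in the open interval (0, 1) satisfying the Nahm equations 1 - z_i = Π_{j=1}^N z_j^{a_{ij}} for i = 1, …, N (real powers z_j^{a_{ij}} = exp(a_{ij} log z_j)). -/
/-!
In the coordinates `u i = log (z i) < 0` the Nahm equations read `(a *ᵥ u) i + g (u i) = 0`, where
`g t = -log (1 - exp t)` is increasing on `(-∞, 0)` and blows up at `0⁻`. These are the critical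
point equations of the energy `uᵀ a u / 2 + ∑ i, G (u i)` with `G' = g`.

Uniqueness: for two solutions `u ≠ v`, positive definiteness and the monotonicity of `g` give
`0 < (u - v)ᵀ a (u - v) = -∑ i, (u i - v i) (g (u i) - g (v i)) ≤ 0`.

Existence: minimise the energy on a box `[-M, β]ᴺ`. The quadratic part is coercive and `G` grows at
most linearly, so for large `M` the minimiser stays off the faces `u i = -M`; for `β` close to `0`
the blow-up of `g` makes the energy increasing in each coordinate near `β`, so the minimiser stays
off the faces `u i = β` as well. It is therefore an interior critical point.
-/

open Real Set Filter Topology Matrix Function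

noncomputable def negLogOneSubExp (t : ℝ) : ℝ := -log (1 - exp t)

/-- Up to an additive constant this is the dilogarithm `Li₂ (exp t)`. -/
noncomputable def negLogOneSubExpPrimitive (t : ℝ) : ℝ := ∫ s in (-1)..t, negLogOneSubExp s

lemma one_sub_exp_pos {t : ℝ} (ht : t < 0) : 0 < 1 - exp t := by
  linarith [exp_lt_one_iff.2 ht]

lemma negLogOneSubExp_nonneg {t : ℝ} (ht : t < 0) : 0 ≤ negLogOneSubExp t :=
  neg_nonneg.2 <| log_nonpos (one_sub_exp_pos ht).le (by linarith [exp_pos t])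

lemma monotoneOn_negLogOneSubExp : MonotoneOn negLogOneSubExp (Iio 0) := by
  intro s _ t ht hst
  exact neg_le_neg <| log_le_log (one_sub_exp_pos ht) (by gcongr)

lemma continuousOn_negLogOneSubExp : ContinuousOn negLogOneSubExp (Iio 0) :=
  fun t ht => (ContinuousAt.log (f := fun t => 1 - exp t) (by fun_prop)
    (one_sub_exp_pos ht).ne').neg.continuousWithinAt

lemma tendsto_negLogOneSubExp : Tendsto negLogOneSubExp (𝓝[<] 0) atTop := by
  have h : Tendsto (fun t => 1 - exp t) (𝓝[<] 0) (𝓝[>] 0) := by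
    refine tendsto_nhdsWithin_iff.2
      ⟨?_, eventually_nhdsWithin_of_forall fun t ht => one_sub_exp_pos ht⟩
    have : Tendsto (fun t => 1 - exp t) (𝓝 0) (𝓝 (1 - exp 0)) :=
      (continuous_const.sub continuous_exp).tendsto 0
    simpa using this.mono_left nhdsWithin_le_nhds
  exact tendsto_neg_atBot_atTop.comp (tendsto_log_nhdsGT_zero.comp h)

lemma intervalIntegrable_negLogOneSubExp {s t : ℝ} (hs : s < 0) (ht : t < 0) :
    IntervalIntegrable negLogOneSubExp MeasureTheory.volume s t :=
  (continuousOn_negLogOneSubExp.mono fun _ hx =>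
    hx.2.trans_lt (max_lt hs ht)).intervalIntegrable

lemma hasDerivAt_negLogOneSubExpPrimitive {t : ℝ} (ht : t < 0) :
    HasDerivAt negLogOneSubExpPrimitive (negLogOneSubExp t) t :=
  intervalIntegral.integral_hasDerivAt_right (intervalIntegrable_negLogOneSubExp (by norm_num) ht)
    (continuousOn_negLogOneSubExp.stronglyMeasurableAtFilter isOpen_Iio t ht)
    (continuousOn_negLogOneSubExp.continuousAt (isOpen_Iio.mem_nhds ht))

lemma mul_add_one_le_negLogOneSubExpPrimitive {t : ℝ} (ht : t < 0) :
    negLogOneSubExp (-1) * (t + 1) ≤ negLogOneSubExpPrimitive t := by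
  have hint := intervalIntegrable_negLogOneSubExp (by norm_num : (-1 : ℝ) < 0) ht
  rcases le_total (-1) t with h | h
  · have := intervalIntegral.integral_mono_on h intervalIntegrable_const hint
      fun s hs => monotoneOn_negLogOneSubExp (by norm_num : (-1 : ℝ) ∈ Iio 0)
        (hs.2.trans_lt ht) hs.1
    simp only [intervalIntegral.integral_const, smul_eq_mul] at this
    rw [negLogOneSubExpPrimitive]; linarith
  · have := intervalIntegral.integral_mono_on h hint.symm intervalIntegrable_const
      fun s hs => monotoneOn_negLogOneSubExp (hs.2.trans_lt (by norm_num))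
        (by norm_num : (-1 : ℝ) ∈ Iio 0) hs.2
    simp only [intervalIntegral.integral_const, smul_eq_mul] at this
    rw [negLogOneSubExpPrimitive, intervalIntegral.integral_symm]; linarith

variable {ι : Type*} [Fintype ι]

lemma HasDerivAt.dotProduct_mulVec {a : Matrix ι ι ℝ} {γ : ℝ → ι → ℝ} {γ' : ι → ℝ} {s : ℝ}
    (hγ : HasDerivAt γ γ' s) :
    HasDerivAt (fun t => γ t ⬝ᵥ a *ᵥ γ t) (γ' ⬝ᵥ a *ᵥ γ s + γ s ⬝ᵥ a *ᵥ γ') s := by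
  have hγi := hasDerivAt_pi.1 hγ
  have := HasDerivAt.fun_sum (u := Finset.univ) fun i _ =>
    (hγi i).fun_mul (HasDerivAt.fun_sum (u := Finset.univ) fun j _ => (hγi j).const_mul (a i j))
  refine this.congr_deriv ?_
  simp only [dotProduct, mulVec, Finset.sum_add_distrib]

lemma Matrix.IsSymm.hasDerivAt_dotProduct_mulVec_update [DecidableEq ι] {a : Matrix ι ι ℝ}
    (ha : a.IsSymm) (u : ι → ℝ) (i : ι) (s : ℝ) :
    HasDerivAt (fun t => update u i t ⬝ᵥ a *ᵥ update u i t) (2 * (a *ᵥ update u i s) i) s := by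
  convert (hasDerivAt_update u i s).dotProduct_mulVec (a := a) using 1
  rw [single_one_dotProduct, mulVec_single_one, dotProduct_comm,
    show a.col i ⬝ᵥ update u i s = (aᵀ *ᵥ update u i s) i from rfl, ha.eq, two_mul]

theorem Matrix.PosDef.exists_pos_mul_sq_norm_le {a : Matrix ι ι ℝ} (ha : a.PosDef) :
    ∃ m > 0, ∀ u : ι → ℝ, m * ‖u‖ ^ 2 ≤ u ⬝ᵥ a *ᵥ u := by
  have hunit : ∀ u : ι → ℝ, u ≠ 0 → ‖u‖⁻¹ • u ∈ Metric.sphere 0 1 := fun u hu => by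
    simp [norm_smul, hu]
  have hhom : ∀ (c : ℝ) (u : ι → ℝ), (c • u) ⬝ᵥ a *ᵥ (c • u) = c ^ 2 * (u ⬝ᵥ a *ᵥ u) := by
    intro c u; simp only [mulVec_smul, smul_dotProduct, dotProduct_smul, smul_eq_mul]; ring
  rcases (Metric.sphere (0 : ι → ℝ) 1).eq_empty_or_nonempty with hS | hS
  · refine ⟨1, one_pos, fun u => ?_⟩
    obtain rfl : u = 0 := by_contra fun hu => by simpa [hS] using hunit u hu
    simp
  obtain ⟨v, hv, hmin⟩ := (isCompact_sphere (0 : ι → ℝ) 1).exists_isMinOn hS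
    (by fun_prop : Continuous fun u : ι → ℝ => u ⬝ᵥ a *ᵥ u).continuousOn
  have hv0 : v ≠ 0 := ne_zero_of_mem_unit_sphere ⟨v, hv⟩
  refine ⟨v ⬝ᵥ a *ᵥ v, by simpa using ha.dotProduct_mulVec_pos hv0, fun u => ?_⟩
  rcases eq_or_ne u 0 with rfl | hu
  · simp
  have : v ⬝ᵥ a *ᵥ v ≤ (‖u‖⁻¹ • u) ⬝ᵥ a *ᵥ (‖u‖⁻¹ • u) := hmin (hunit u hu)
  rw [hhom, inv_pow] at this
  have hu' : 0 < ‖u‖ ^ 2 := by positivity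
  calc v ⬝ᵥ a *ᵥ v * ‖u‖ ^ 2 ≤ (‖u‖ ^ 2)⁻¹ * (u ⬝ᵥ a *ᵥ u) * ‖u‖ ^ 2 := by gcongr
    _ = u ⬝ᵥ a *ᵥ u := by field_simp

theorem Matrix.PosDef.eq_of_mulVec_add_eq {a : Matrix ι ι ℝ} (ha : a.PosDef) {f : ℝ → ℝ}
    {S : Set ℝ} (hf : MonotoneOn f S) {u v : ι → ℝ} (hu : ∀ i, u i ∈ S) (hv : ∀ i, v i ∈ S)
    (h : ∀ i, (a *ᵥ u) i + f (u i) = (a *ᵥ v) i + f (v i)) : u = v := by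
  by_contra hne
  have hpos : 0 < (u - v) ⬝ᵥ a *ᵥ (u - v) := by
    simpa using ha.dotProduct_mulVec_pos (sub_ne_zero.2 hne)
  have hmono : ∀ i, (u i - v i) * (f (v i) - f (u i)) ≤ 0 := fun i => by
    rcases le_total (u i) (v i) with huv | huv
    · nlinarith [hf (hu i) (hv i) huv]
    · nlinarith [hf (hv i) (hu i) huv]
  have hQ : (u - v) ⬝ᵥ a *ᵥ (u - v) = ∑ i, (u i - v i) * (f (v i) - f (u i)) := by
    simp only [dotProduct, mulVec_sub, Pi.sub_apply]
    refine Finset.sum_congr rfl fun i _ => ?_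
    rw [show (a *ᵥ u) i - (a *ᵥ v) i = f (v i) - f (u i) by linarith [h i]]
  linarith [Finset.sum_nonpos fun i (_ : i ∈ Finset.univ) => hmono i]

noncomputable def nahmEnergy (a : Matrix ι ι ℝ) (u : ι → ℝ) : ℝ :=
  u ⬝ᵥ a *ᵥ u / 2 + ∑ i, negLogOneSubExpPrimitive (u i)

variable {a : Matrix ι ι ℝ}

lemma hasDerivAt_nahmEnergy_update [DecidableEq ι] (ha : a.IsSymm) (u : ι → ℝ) (i : ι) {s : ℝ}
    (hs : s < 0) :
    HasDerivAt (fun t => nahmEnergy a (update u i t))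
      ((a *ᵥ update u i s) i + negLogOneSubExp s) s := by
  have hsum : ∀ t, ∑ j, negLogOneSubExpPrimitive (update u i t j) =
      negLogOneSubExpPrimitive t + ∑ j ∈ Finset.univ \ {i}, negLogOneSubExpPrimitive (u j) :=
    fun t => by rw [← comp_def, comp_update, Finset.sum_update_of_mem (Finset.mem_univ i)]; rfl
  simp only [nahmEnergy, hsum]
  refine (((ha.hasDerivAt_dotProduct_mulVec_update u i s).div_const 2).fun_add
    ((hasDerivAt_negLogOneSubExpPrimitive hs).add_const _)).congr_deriv ?_
  ring

lemma continuousOn_nahmEnergy : ContinuousOn (nahmEnergy a) (univ.pi fun _ => Iio 0) := by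
  have hG : ContinuousOn negLogOneSubExpPrimitive (Iio 0) := fun t ht =>
    (hasDerivAt_negLogOneSubExpPrimitive ht).continuousAt.continuousWithinAt
  refine (by fun_prop : Continuous fun u : ι → ℝ => u ⬝ᵥ a *ᵥ u / 2).continuousOn.add <|
    continuousOn_finsetSum _ fun j _ => hG.comp (continuous_apply j).continuousOn ?_
  exact fun u hu => hu j (mem_univ j)

section Box

variable [DecidableEq ι] {α β : ℝ} {u : ι → ℝ}

lemma mulVec_add_negLogOneSubExp_eq_zero_of_isMinOn (ha : a.IsSymm) (hβ : β < 0)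
    (hu : IsMinOn (nahmEnergy a) (univ.pi fun _ => Icc α β) u)
    (huK : u ∈ univ.pi fun _ => Icc α β) {i : ι} (hi : u i ∈ Ioo α β) :
    (a *ᵥ u) i + negLogOneSubExp (u i) = 0 := by
  have hmin : IsLocalMin (fun t => nahmEnergy a (update u i t)) (u i) :=
    Filter.mem_of_superset (Icc_mem_nhds hi.1 hi.2) fun t ht => by
      simpa using hu ((update_mem_pi_iff_of_mem huK).2 fun _ => ht)
  simpa using hmin.hasDerivAt_eq_zero (hasDerivAt_nahmEnergy_update ha u i (hi.2.trans hβ))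

lemma ne_right_of_isMinOn_nahmEnergy (ha : a.IsSymm) (hβ : β < 0)
    (hu : IsMinOn (nahmEnergy a) (univ.pi fun _ => Icc α β) u)
    (huK : u ∈ univ.pi fun _ => Icc α β) {i : ι} {t₀ : ℝ} (hαt₀ : α ≤ t₀) (ht₀β : t₀ < β)
    (hderiv : ∀ s ∈ Ioo t₀ β, 0 < (a *ᵥ update u i s) i + negLogOneSubExp s) : u i ≠ β := by
  intro hi
  have hφ : ∀ s ∈ Icc t₀ β, HasDerivAt (fun t => nahmEnergy a (update u i t))
      ((a *ᵥ update u i s) i + negLogOneSubExp s) s := fun s hs =>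
    hasDerivAt_nahmEnergy_update ha u i (hs.2.trans_lt hβ)
  obtain ⟨s, hs, hslope⟩ := exists_hasDerivAt_eq_slope _ _ ht₀β
    (fun s hs => (hφ s hs).continuousAt.continuousWithinAt)
    fun s hs => hφ s (Ioo_subset_Icc_self hs)
  have hmin : nahmEnergy a u ≤ nahmEnergy a (update u i t₀) :=
    hu ((update_mem_pi_iff_of_mem huK).2 fun _ => ⟨hαt₀, ht₀β.le⟩)
  rw [show update u i β = u by rw [← hi, update_eq_self]] at hslope
  have := hderiv s hs
  rw [hslope, div_pos_iff_of_pos_right (sub_pos.2 ht₀β)] at this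
  linarith

end Box

lemma le_nahmEnergy {m M : ℝ} (hm : 0 ≤ m) (hmQ : ∀ u : ι → ℝ, m * ‖u‖ ^ 2 ≤ u ⬝ᵥ a *ᵥ u)
    {v : ι → ℝ} (hv : ∀ j, v j ∈ Ico (-M) 0) (i : ι) :
    m * v i ^ 2 / 2 - Fintype.card ι * negLogOneSubExp (-1) * M ≤ nahmEnergy a v := by
  have hc := negLogOneSubExp_nonneg (by norm_num : (-1 : ℝ) < 0)
  have hQ : m * v i ^ 2 ≤ v ⬝ᵥ a *ᵥ v := by
    refine le_trans ?_ (hmQ v)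
    rw [← sq_abs]
    gcongr
    simpa using norm_le_pi_norm v i
  have hG : -(Fintype.card ι * negLogOneSubExp (-1) * M) ≤
      ∑ j, negLogOneSubExpPrimitive (v j) := by
    have hGj : ∀ j, -(negLogOneSubExp (-1) * M) ≤ negLogOneSubExpPrimitive (v j) := fun j => by
      nlinarith [mul_add_one_le_negLogOneSubExpPrimitive (hv j).2, (hv j).1]
    simpa [mul_assoc] using Finset.sum_le_sum fun j (_ : j ∈ Finset.univ) => hGj j
  rw [nahmEnergy]; linarith

theorem Matrix.PosDef.exists_mulVec_add_negLogOneSubExp_eq_zero (ha : a.PosDef) :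
    ∃ u : ι → ℝ, (∀ i, u i < 0) ∧ ∀ i, (a *ᵥ u) i + negLogOneSubExp (u i) = 0 := by
  classical
  have hsymm : a.IsSymm := isHermitian_iff_isSymm.1 ha.isHermitian
  obtain ⟨m, hm, hmQ⟩ := ha.exists_pos_mul_sq_norm_le
  set C := Fintype.card ι * negLogOneSubExp (-1) with hCdef
  set F₀ := nahmEnergy a fun _ => -1
  obtain ⟨M, hMF₀, hM⟩ : ∃ M, F₀ < M * (m / 2 * M - C) ∧ 1 ≤ M :=
    ((tendsto_id.atTop_mul_atTop₀ (tendsto_atTop_add_const_right _ (-C)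
      (tendsto_id.const_mul_atTop (half_pos hm)))).eventually_gt_atTop F₀).and
      (eventually_ge_atTop 1) |>.exists
  obtain ⟨R, hR⟩ := (isCompact_univ_pi fun _ : ι => isCompact_Icc (a := -M) (b := 0))
    |>.exists_bound_of_continuousOn (by fun_prop : Continuous fun v : ι → ℝ => a *ᵥ v).continuousOn
  obtain ⟨t₀, hRt₀, ht₀⟩ := ((tendsto_negLogOneSubExp.eventually_gt_atTop R).and
    (Ioo_mem_nhdsLT (by norm_num : (-1 : ℝ) < 0))).exists
  have hβ : t₀ / 2 < 0 := by linarith [ht₀.2]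
  obtain ⟨u, huK, hu⟩ := (isCompact_univ_pi fun _ : ι => isCompact_Icc (a := -M) (b := t₀ / 2))
    |>.exists_isMinOn ⟨fun _ => -1, fun _ _ => ⟨by linarith, by linarith [ht₀.1]⟩⟩
    (continuousOn_nahmEnergy.mono fun v hv j _ => (hv j trivial).2.trans_lt hβ)
  have huneg : ∀ i, u i < 0 := fun i => (huK i trivial).2.trans_lt hβ
  refine ⟨u, huneg, fun i =>
    mulVec_add_negLogOneSubExp_eq_zero_of_isMinOn hsymm hβ hu huK ⟨?_, ?_⟩⟩
  · refine (huK i trivial).1.lt_of_ne fun hMi => ?_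
    have hE := le_nahmEnergy hm.le hmQ (fun j => ⟨(huK j trivial).1, huneg j⟩) i
    rw [← hMi, neg_sq, ← hCdef] at hE
    have h₀ : nahmEnergy a u ≤ F₀ := hu fun _ _ => ⟨by linarith, by linarith [ht₀.1]⟩
    linarith
  · refine (huK i trivial).2.lt_of_ne <| ne_right_of_isMinOn_nahmEnergy hsymm hβ hu huK
      (by linarith [ht₀.1]) (by linarith [ht₀.2]) fun s hs => ?_
    have hbd := hR (update u i s) fun j _ => by
      rcases eq_or_ne j i with rfl | hji
      · simp only [update_self]; exact ⟨by linarith [ht₀.1, hs.1], by linarith [hs.2]⟩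
      · simp only [update_of_ne hji]; exact ⟨(huK j trivial).1, (huK j trivial).2.trans hβ.le⟩
    have hlin := (abs_le.1 ((norm_le_pi_norm _ i).trans hbd)).1
    linarith [monotoneOn_negLogOneSubExp ht₀.2 (hs.2.trans hβ) hs.1.le]

lemma one_sub_exp_eq_prod_exp_rpow_iff (a : Matrix ι ι ℝ) (u : ι → ℝ) {i : ι} (hi : u i < 0) :
    1 - exp (u i) = ∏ j, exp (u j) ^ a i j ↔ (a *ᵥ u) i + negLogOneSubExp (u i) = 0 := by
  have hprod : ∏ j, exp (u j) ^ a i j = exp ((a *ᵥ u) i) := by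
    simp only [← exp_mul, ← exp_sum, mulVec, dotProduct, mul_comm]
  rw [hprod, negLogOneSubExp]
  constructor
  · intro h
    rw [h, log_exp, add_neg_cancel]
  · intro h
    rw [← exp_log (one_sub_exp_pos hi)]
    congr 1
    linarith

theorem nahm_equation_unique_solution_general (N : ℕ)
    (a : Matrix (Fin N) (Fin N) ℝ) (hpos : a.PosDef) :
    ∃! z : Fin N → ℝ, (∀ i, z i ∈ Set.Ioo (0 : ℝ) 1) ∧
      ∀ i, 1 - z i = ∏ j, z j ^ a i j := by
  obtain ⟨u, hu_neg, hu⟩ := hpos.exists_mulVec_add_negLogOneSubExp_eq_zero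
  refine ⟨fun i => exp (u i), ⟨fun i => ⟨exp_pos _, exp_lt_one_iff.2 (hu_neg i)⟩,
    fun i => (one_sub_exp_eq_prod_exp_rpow_iff a u (hu_neg i)).2 (hu i)⟩, ?_⟩
  rintro z ⟨hz, hz_eq⟩
  have hlog : ∀ i, log (z i) < 0 := fun i => log_neg (hz i).1 (hz i).2
  have hexp : ∀ i, exp (log (z i)) = z i := fun i => exp_log (hz i).1
  have hv : (fun i => log (z i)) = u :=
    hpos.eq_of_mulVec_add_eq monotoneOn_negLogOneSubExp hlog hu_neg fun i => by
      rw [hu i, ← one_sub_exp_eq_prod_exp_rpow_iff a _ (hlog i)]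
      simpa only [hexp] using hz_eq i
  funext i
  rw [← hv, hexp]

/-- For a symmetric positive definite real matrix `a`, the Nahm equations
`1 - z_i = ∏_j z_j ^ (a i j)` (real powers) have a unique solution with all
`z_i ∈ (0, 1)`. -/
theorem nahm_equation_unique_solution (N : ℕ) (hN : 1 ≤ N)
    (a : Matrix (Fin N) (Fin N) ℝ) (hsym : a.IsSymm) (hpos : a.PosDef) :
    ∃! z : Fin N → ℝ, (∀ i, z i ∈ Set.Ioo (0 : ℝ) 1) ∧
      ∀ i, 1 - z i = ∏ j, z j ^ a i j :=
  nahm_equation_unique_solution_general N a hpos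
end

section
/- Let N ≥ 1 and let A, B, C, D be N × N integer matrices such that the 2N × 2N block matrix with rows (A B) and (C D) belongs to the symplectic group Sp_{2N}(ℤ). Let z_1, …, z_N be complex numbers, each different from 0 and 1, satisfying the generalized Neumann–Zagier equations Π_{j=1}^N z_j^{A_{ij}} = (-1)^{(ABᵗ)_{ii}} Π_{j=1}^N (1 - z_j)^{B_{ij}} for i = 1, …, N (integer powers). Then 2 · Σ_{j=1}^N (z_j) ∧ (1 - z_j) = 0 in Λ²(ℂ×), the second exterior power over ℤ of the multiplicative group ℂ× written additively. -/
open ExteriorAlgebra Matrix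

namespace NZAux

/-- wedge directly on the additive group. -/
noncomputable def wg (a b : Additive ℂˣ) : ExteriorAlgebra ℤ (Additive ℂˣ) :=
  ι ℤ a * ι ℤ b

lemma wg_swap (a b : Additive ℂˣ) : wg a b = - wg b a :=
  eq_neg_of_add_eq_zero_left (ExteriorAlgebra.ι_add_mul_swap a b)

lemma wg_smul_left (n : ℤ) (a b : Additive ℂˣ) : wg (n • a) b = n • wg a b := by
  unfold wg; rw [map_zsmul, smul_mul_assoc]

lemma wg_smul_right (n : ℤ) (a b : Additive ℂˣ) : wg a (n • b) = n • wg a b := by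
  unfold wg; rw [map_zsmul, mul_smul_comm]

variable {N : ℕ}

lemma wg_sum_sum (p q : Fin N → ℤ) (f g : Fin N → Additive ℂˣ) :
    wg (∑ j, p j • f j) (∑ k, q k • g k)
      = ∑ j, ∑ k, (p j * q k) • wg (f j) (g k) := by
  unfold wg
  rw [map_sum, map_sum, Finset.sum_mul_sum]
  exact Finset.sum_congr rfl fun j _ => Finset.sum_congr rfl fun k _ => by
    rw [map_zsmul, map_zsmul, smul_mul_smul_comm]

lemma sum_wg (P Q : Matrix (Fin N) (Fin N) ℤ) (f g : Fin N → Additive ℂˣ) :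
    ∑ i, wg (∑ j, P i j • f j) (∑ k, Q i k • g k)
      = ∑ j, ∑ k, (Pᵀ * Q) j k • wg (f j) (g k) := by
  calc ∑ i, wg (∑ j, P i j • f j) (∑ k, Q i k • g k)
      = ∑ i, ∑ j, ∑ k, (P i j * Q i k) • wg (f j) (g k) :=
        Finset.sum_congr rfl fun i _ => wg_sum_sum _ _ _ _
    _ = ∑ j, ∑ i, ∑ k, (P i j * Q i k) • wg (f j) (g k) := Finset.sum_comm
    _ = ∑ j, ∑ k, ∑ i, (P i j * Q i k) • wg (f j) (g k) :=
        Finset.sum_congr rfl fun j _ => Finset.sum_comm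
    _ = ∑ j, ∑ k, (Pᵀ * Q) j k • wg (f j) (g k) := by
        refine Finset.sum_congr rfl fun j _ => Finset.sum_congr rfl fun k _ => ?_
        rw [Matrix.mul_apply, Finset.sum_smul]
        exact Finset.sum_congr rfl fun i _ => by rw [Matrix.transpose_apply]

lemma two_smul_sym_eq_zero (S : Matrix (Fin N) (Fin N) ℤ) (hS : Sᵀ = S)
    (f : Fin N → Additive ℂˣ) :
    (2 : ℤ) • ∑ j, ∑ k, S j k • wg (f j) (f k) = 0 := by
  have h : (∑ j, ∑ k, S j k • wg (f j) (f k))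
      = - ∑ j, ∑ k, S j k • wg (f j) (f k) := by
    calc ∑ j, ∑ k, S j k • wg (f j) (f k)
        = ∑ j, ∑ k, -(S j k • wg (f k) (f j)) := by
          refine Finset.sum_congr rfl fun j _ => Finset.sum_congr rfl fun k _ => ?_
          rw [wg_swap, smul_neg]
      _ = - ∑ j, ∑ k, S j k • wg (f k) (f j) := by
          simp only [Finset.sum_neg_distrib]
      _ = - ∑ j, ∑ k, S j k • wg (f j) (f k) := by
          congr 1
          rw [Finset.sum_comm]
          refine Finset.sum_congr rfl fun j _ => Finset.sum_congr rfl fun k _ => ?_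
          rw [show S k j = Sᵀ j k from rfl, hS]
  rw [two_smul]
  nth_rewrite 2 [h]
  exact add_neg_cancel _

end NZAux

open NZAux in
/-- For any solution of the generalized Neumann–Zagier equations attached to a
half-symplectic matrix `H = (A B)` (the upper half of an element of `Sp_{2N}(ℤ)`),
the element `2 ∑ (z_j) ∧ (1 - z_j)` vanishes in `Λ²(ℂˣ)`. -/
theorem half_symplectic_solution_wedge_sum (N : ℕ) (hN : 1 ≤ N)
    (A B C D : Matrix (Fin N) (Fin N) ℤ)
    (hsp : Matrix.fromBlocks A B C D ∈ Matrix.symplecticGroup (Fin N) ℤ)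
    (z : Fin N → ℂ) (h0 : ∀ i, z i ≠ 0) (h1 : ∀ i, z i ≠ 1)
    (heq : ∀ i, ∏ j, z j ^ (A i j) =
      (-1 : ℂ) ^ ((A * Bᵀ) i i) * ∏ j, (1 - z j) ^ (B i j)) :
    (2 : ℤ) • ∑ i, wedge (Units.mk0 (z i) (h0 i))
      (Units.mk0 (1 - z i) (sub_ne_zero_of_ne (Ne.symm (h1 i)))) = 0 := by
  -- the units and their additive avatars
  let zu : Fin N → ℂˣ := fun j => Units.mk0 (z j) (h0 j)
  let wu : Fin N → ℂˣ := fun j => Units.mk0 (1 - z j) (sub_ne_zero_of_ne (Ne.symm (h1 j)))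
  let X : Fin N → Additive ℂˣ := fun j => Additive.ofMul (zu j)
  let Y : Fin N → Additive ℂˣ := fun j => Additive.ofMul (wu j)
  -- block relations coming from the symplectic condition (on the transpose)
  have hspT := SymplecticGroup.transpose_mem hsp
  rw [SymplecticGroup.mem_iff] at hspT
  simp only [Matrix.fromBlocks_transpose, Matrix.transpose_transpose, Matrix.J,
    Matrix.fromBlocks_multiply] at hspT
  have h11 : Cᵀ * A + (-Aᵀ) * C = 0 := by
    have := congrArg Matrix.toBlocks₁₁ hspT
    simp only [Matrix.toBlocks_fromBlocks₁₁] at this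
    simpa using this
  have h12 : Cᵀ * B + (-Aᵀ) * D = -1 := by
    have := congrArg Matrix.toBlocks₁₂ hspT
    simp only [Matrix.toBlocks_fromBlocks₁₂] at this
    simpa using this
  have h22 : Dᵀ * B + (-Bᵀ) * D = 0 := by
    have := congrArg Matrix.toBlocks₂₂ hspT
    simp only [Matrix.toBlocks_fromBlocks₂₂] at this
    simpa using this
  rw [Matrix.neg_mul, add_neg_eq_zero] at h11 h22
  have hCA : (Cᵀ * A)ᵀ = Cᵀ * A := by
    rw [h11, Matrix.transpose_mul, Matrix.transpose_transpose, ← h11]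
  have hBD : (Bᵀ * D)ᵀ = Bᵀ * D := by
    rw [Matrix.transpose_mul, Matrix.transpose_transpose, h22]
  have hADCB : Aᵀ * D - Cᵀ * B = 1 := by
    rw [Matrix.neg_mul] at h12
    rw [← neg_neg (Aᵀ * D - Cᵀ * B)]
    rw [show -(Aᵀ * D - Cᵀ * B) = Cᵀ * B + -(Aᵀ * D) by abel, h12, neg_neg]
  -- the gluing equations, squared and made additive
  have key : ∀ i, (2 : ℤ) • (∑ j, A i j • X j) = (2 : ℤ) • (∑ j, B i j • Y j) := by
    intro i
    set U : ℂˣ := ∏ j, zu j ^ (A i j) with hU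
    set V : ℂˣ := ∏ j, wu j ^ (B i j) with hV
    have hUval : (U : ℂ) = ∏ j, z j ^ (A i j) := by
      rw [hU, Units.coe_prod]
      exact Finset.prod_congr rfl fun j _ => by
        rw [Units.val_zpow_eq_zpow_val]; rfl
    have hVval : (V : ℂ) = ∏ j, (1 - z j) ^ (B i j) := by
      rw [hV, Units.coe_prod]
      exact Finset.prod_congr rfl fun j _ => by
        rw [Units.val_zpow_eq_zpow_val]; rfl
    have hc : ((-1 : ℂ) ^ ((A * Bᵀ) i i)) * ((-1 : ℂ) ^ ((A * Bᵀ) i i)) = 1 := by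
      rw [← zpow_add₀ (by norm_num : (-1 : ℂ) ≠ 0)]
      rw [show (A * Bᵀ) i i + (A * Bᵀ) i i = 2 * ((A * Bᵀ) i i) by ring]
      rw [_root_.zpow_mul]
      norm_num
    have hUV : U * U = V * V := by
      apply Units.ext
      rw [Units.val_mul, Units.val_mul, hUval, hVval, heq i, mul_mul_mul_comm, hc, one_mul]
    have := congrArg Additive.ofMul hUV
    rw [ofMul_mul, ofMul_mul] at this
    have hofU : Additive.ofMul U = ∑ j, A i j • X j := by
      rw [hU, ofMul_prod]
      exact Finset.sum_congr rfl fun j _ => ofMul_zpow _ _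
    have hofV : Additive.ofMul V = ∑ j, B i j • Y j := by
      rw [hV, ofMul_prod]
      exact Finset.sum_congr rfl fun j _ => ofMul_zpow _ _
    rw [hofU, hofV] at this
    rw [two_zsmul, two_zsmul]
    exact this
  -- two vanishing double sums
  have claim1 : (2 : ℤ) • ∑ j, ∑ k, (Aᵀ * D) j k • wg (X j) (Y k) = 0 := by
    rw [← sum_wg A D X Y, Finset.smul_sum]
    have step : ∀ i ∈ Finset.univ, (2:ℤ) • wg (∑ j, A i j • X j) (∑ k, D i k • Y k)
        = (2:ℤ) • wg (∑ j, B i j • Y j) (∑ k, D i k • Y k) := by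
      intro i _
      rw [← wg_smul_left, ← wg_smul_left, key i]
    rw [Finset.sum_congr rfl step, ← Finset.smul_sum, sum_wg B D Y Y]
    exact two_smul_sym_eq_zero (Bᵀ * D) hBD Y
  have claim2 : (2 : ℤ) • ∑ j, ∑ k, (Cᵀ * B) j k • wg (X j) (Y k) = 0 := by
    rw [← sum_wg C B X Y, Finset.smul_sum]
    have step : ∀ i ∈ Finset.univ, (2:ℤ) • wg (∑ j, C i j • X j) (∑ k, B i k • Y k)
        = (2:ℤ) • wg (∑ j, C i j • X j) (∑ k, A i k • X k) := by
      intro i _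
      rw [← wg_smul_right, ← wg_smul_right, key i]
    rw [Finset.sum_congr rfl step, ← Finset.smul_sum, sum_wg C A X X]
    exact two_smul_sym_eq_zero (Cᵀ * A) hCA X
  -- combine
  have main : (2 : ℤ) • ∑ j, wg (X j) (Y j) = 0 := by
    have hdiag : ∑ j, wg (X j) (Y j)
        = ∑ j, ∑ k, (Aᵀ * D) j k • wg (X j) (Y k)
          - ∑ j, ∑ k, (Cᵀ * B) j k • wg (X j) (Y k) := by
      rw [← Finset.sum_sub_distrib]
      refine Finset.sum_congr rfl fun j _ => ?_
      rw [← Finset.sum_sub_distrib]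
      have step : ∀ k ∈ Finset.univ,
          (Aᵀ * D) j k • wg (X j) (Y k) - (Cᵀ * B) j k • wg (X j) (Y k)
          = ((1 : Matrix (Fin N) (Fin N) ℤ) j k) • wg (X j) (Y k) := by
        intro k _
        rw [← sub_smul]
        congr 1
        rw [← hADCB]
        rfl
      rw [Finset.sum_congr rfl step]
      simp [Matrix.one_apply, ite_smul]
    rw [hdiag, smul_sub, claim1, claim2, sub_zero]
  exact main
end
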